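/- arXiv:1310.4723 — 2 statements merged into one kernel-verified Lean document; each statement's English description precedes it below -/
import Mathlib

section
/- For every y in the closed simplex D = {y ∈ [0,1]^N : ∑_k y_k = 1}, the restriction of B(y) to E = {x : ∑_k x_k = 0} is injective (and hence invertible on E), even when some components y_k vanish. -/
/-!
Row `i` of `B(y) x = 0` reads `∑ⱼ f i j (yᵢ xⱼ - yⱼ xᵢ) = 0`, a discrete maximum principle for
the ratio `x / y`. Where `yᵢ = 0` the row reduces to `xᵢ ∑ⱼ f i j yⱼ = 0` with a positive
coefficient, so `x` vanishes off the support of `y`. At an index `i` of the support where `xⱼ / yⱼ`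
is maximal every summand is `≤ 0`, hence all vanish and `x` is proportional to `y`; then
`∑ x = 0` forces `x = 0`.
-/

open Finset Matrix

namespace MaxwellStefan

variable {ι : Type*} [Fintype ι] {f : ι → ι → ℝ} {x y : ι → ℝ}

def matrix [DecidableEq ι] (f : ι → ι → ℝ) (y : ι → ℝ) : Matrix ι ι ℝ :=
  Matrix.of fun i j => if i = j then -(∑ l, f i l * y l) else f i j * y i

theorem matrix_mulVec_apply [DecidableEq ι] (hdiag : ∀ i, f i i = 0) (x : ι → ℝ) (i : ι) :
    (matrix f y *ᵥ x) i = ∑ j, f i j * (y i * x j - y j * x i) := by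
  have hterm : ∀ j, matrix f y i j * x j
      = f i j * (y i * x j) - if i = j then (∑ l, f i l * y l) * x i else 0 := by
    intro j
    by_cases h : i = j
    · subst h; simp [matrix, hdiag]
    · simp [matrix, h, mul_assoc]
  simp_rw [mulVec, dotProduct, hterm, mul_sub, sum_sub_distrib, sum_ite_eq, mem_univ, if_true,
    sum_mul, mul_assoc]

section Balance

variable (hf : ∀ i j, i ≠ j → 0 < f i j) (hbal : ∀ i, ∑ j, f i j * (y i * x j - y j * x i) = 0)
include hf hbal

theorem eq_zero_of_apply_eq_zero (hy : ∀ k, 0 ≤ y k) {l : ι} (hl : 0 < y l) {i : ι}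
    (hi : y i = 0) : x i = 0 := by
  have hcoef : 0 < ∑ j, f i j * y j := by
    have hil : i ≠ l := by rintro rfl; exact hl.ne' hi
    refine sum_pos' (fun j _ => ?_) ⟨l, mem_univ l, mul_pos (hf i l hil) hl⟩
    by_cases hij : i = j
    · simp [← hij, hi]
    · exact mul_nonneg (hf i j hij).le (hy j)
  have hrow : -(x i * ∑ j, f i j * y j) = 0 := by
    rw [← hbal i, mul_sum, ← sum_neg_distrib]
    exact sum_congr rfl fun j _ => by rw [hi]; ring
  simpa [hcoef.ne'] using hrow

theorem exists_pos_forall_sub_nonpos (hy : ∀ k, 0 ≤ y k) {l : ι} (hl : 0 < y l) :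
    ∃ i, 0 < y i ∧ ∀ j, y i * x j - y j * x i ≤ 0 := by
  obtain ⟨i, hi, hmax⟩ :=
    exists_max_image {k | 0 < y k} (fun k => x k / y k) ⟨l, by simpa using hl⟩
  rw [mem_filter_univ] at hi
  refine ⟨i, hi, fun j => ?_⟩
  rcases (hy j).eq_or_lt with hj | hj
  · simp [← hj, eq_zero_of_apply_eq_zero hf hbal hy hl hj.symm]
  · have := (div_le_div_iff₀ hj hi).1 (hmax j (by simpa using hj))
    linarith

theorem mul_eq_mul_of_forall_sub_nonpos {i : ι} (hi : ∀ j, y i * x j - y j * x i ≤ 0) (j : ι) :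
    y i * x j = y j * x i := by
  by_cases hij : i = j
  · rw [hij]
  have hnonpos : ∀ k ∈ univ, f i k * (y i * x k - y k * x i) ≤ 0 := fun k _ => by
    by_cases hik : i = k
    · simp [← hik]
    · exact mul_nonpos_of_nonneg_of_nonpos (hf i k hik).le (hi k)
  have := (sum_eq_zero_iff_of_nonpos hnonpos).1 (hbal i) j (mem_univ j)
  rw [mul_eq_zero, or_iff_right (hf i j hij).ne', sub_eq_zero] at this
  exact this

theorem eq_zero_of_forall_sum_eq_zero (hy : ∀ k, 0 ≤ y k) (hy_sum : ∑ k, y k ≠ 0)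
    (hx : ∑ k, x k = 0) : x = 0 := by
  obtain ⟨l, -, hl⟩ := exists_ne_zero_of_sum_ne_zero hy_sum
  obtain ⟨i, hi, hsub⟩ := exists_pos_forall_sub_nonpos hf hbal hy ((hy l).lt_of_ne' hl)
  have hprop := mul_eq_mul_of_forall_sub_nonpos hf hbal hsub
  have hxi : x i = 0 := by
    have : y i * ∑ k, x k = (∑ k, y k) * x i := by simp_rw [mul_sum, sum_mul, hprop]
    simpa [hx, hy_sum] using this
  funext j
  simpa [hxi, hi.ne'] using hprop j

end Balance

theorem eq_zero_of_matrix_mulVec_eq_zero [DecidableEq ι] (hf : ∀ i j, i ≠ j → 0 < f i j)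
    (hdiag : ∀ i, f i i = 0) (hy : ∀ k, 0 ≤ y k) (hy_sum : ∑ k, y k ≠ 0) (hx : ∑ k, x k = 0)
    (hBx : matrix f y *ᵥ x = 0) : x = 0 :=
  eq_zero_of_forall_sum_eq_zero hf
    (fun i => by rw [← matrix_mulVec_apply hdiag, hBx, Pi.zero_apply]) hy hy_sum hx

end MaxwellStefan

theorem maxwell_stefan_B_injective_on_E_closed_simplex_general
    (N : ℕ) (f : Fin N → Fin N → ℝ)
    (hpos : ∀ i j, i ≠ j → 0 < f i j)
    (hdiag : ∀ i, f i i = 0)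
    (y : Fin N → ℝ)
    (hy : ∀ k, 0 ≤ y k ∧ y k ≤ 1) (hsum : ∑ k, y k = 1)
    (B : Matrix (Fin N) (Fin N) ℝ)
    (hB : ∀ i j, B i j = if i = j then -(∑ l, f i l * y l) else f i j * y i) :
    ∀ x : Fin N → ℝ, ∑ i, x i = 0 → B.mulVec x = 0 → x = 0 := by
  obtain rfl : B = MaxwellStefan.matrix f y := Matrix.ext hB
  exact fun x hx hBx => MaxwellStefan.eq_zero_of_matrix_mulVec_eq_zero hpos hdiag
    (fun k => (hy k).1) (by simp [hsum]) hx hBx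

/-- For every y in the closed simplex D, the restriction of B(y) to E
is injective, even when some components of y vanish. -/
theorem maxwell_stefan_B_injective_on_E_closed_simplex
    (N : ℕ) (hN : 2 ≤ N) (f : Fin N → Fin N → ℝ)
    (hsym : ∀ i j, f i j = f j i)
    (hpos : ∀ i j, i ≠ j → 0 < f i j)
    (hdiag : ∀ i, f i i = 0)
    (y : Fin N → ℝ)
    (hy : ∀ k, 0 ≤ y k ∧ y k ≤ 1) (hsum : ∑ k, y k = 1)
    (B : Matrix (Fin N) (Fin N) ℝ)
    (hB : ∀ i j, B i j = if i = j then -(∑ l, f i l * y l) else f i j * y i) :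
    ∀ x : Fin N → ℝ, ∑ i, x i = 0 → B.mulVec x = 0 → x = 0 :=
  maxwell_stefan_B_injective_on_E_closed_simplex_general N f hpos hdiag y hy hsum B hB
end

section
/- Every real eigenvalue λ of A_0(y) = -A(y)P(y)M^{-1} restricted to E, for y ∈ D̊, is strictly positive. Equivalently: if v ∈ E, v ≠ 0, and P(y)M^{-1} v = -λ B(y) v, then λ > 0. -/
/-!
Test the eigenvalue equation against `w = v / y`. On the left, `∑ v = 0` kills the projection
and leaves `∑ yᵢ wᵢ² / Mᵢ > 0`. On the right, `B (y w)` is a weighted graph Laplacian applied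
to `w`, so `⟨B v, w⟩ = -½ ∑ fᵢⱼ yᵢ yⱼ (wᵢ - wⱼ)² ≤ 0`. Hence `λ · (-⟨B v, w⟩) > 0` forces `λ > 0`.
-/

open Finset Matrix

variable {ι R : Type*} [Fintype ι]

section Laplacian

variable [CommRing R]

theorem two_mul_sum_laplacian_mul_eq_neg_sum_sq {a : ι → ι → R} (ha : ∀ i j, a i j = a j i)
    (w : ι → R) :
    2 * ∑ i, (∑ j, a i j * (w j - w i)) * w i = -∑ i, ∑ j, a i j * (w i - w j) ^ 2 := by
  have hswap : ∑ i, ∑ j, a i j * (w i - w j) * w j = ∑ i, ∑ j, a i j * (w j - w i) * w i := by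
    rw [sum_comm]
    simp only [ha]
  have hsplit : ∑ i, ∑ j, a i j * (w i - w j) ^ 2
      = -∑ i, ∑ j, a i j * (w j - w i) * w i - ∑ i, ∑ j, a i j * (w i - w j) * w j := by
    simp only [← sum_neg_distrib, ← sum_sub_distrib]
    exact sum_congr rfl fun i _ => sum_congr rfl fun j _ => by ring
  rw [hsplit, hswap]
  simp only [sum_mul]
  ring

variable [DecidableEq ι]

def maxwellStefanMatrix (f : ι → ι → R) (y : ι → R) : Matrix ι ι R :=
  fun i j => if i = j then -(∑ l, f i l * y l) else f i j * y i

theorem maxwellStefanMatrix_mulVec_mul_apply {f : ι → ι → R} (hdiag : ∀ i, f i i = 0)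
    (y w : ι → R) (i : ι) :
    (maxwellStefanMatrix f y *ᵥ (y * w)) i = ∑ j, f i j * y i * y j * (w j - w i) := by
  have hterm : ∀ j, maxwellStefanMatrix f y i j * (y * w) j
      = f i j * y i * y j * w j - if i = j then (∑ l, f i l * y l) * (y i * w i) else 0 := by
    intro j
    by_cases hij : i = j
    · subst hij
      simp [maxwellStefanMatrix, hdiag]
    · simp [maxwellStefanMatrix, hij, mul_assoc]
  rw [mulVec, dotProduct, sum_congr rfl fun j _ => hterm j, sum_sub_distrib,
    sum_ite_eq, if_pos (mem_univ i), sum_mul, ← sum_sub_distrib]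
  exact sum_congr rfl fun j _ => by ring

theorem two_mul_maxwellStefanMatrix_mulVec_mul_dotProduct {f : ι → ι → R}
    (hsym : ∀ i j, f i j = f j i) (hdiag : ∀ i, f i i = 0) (y w : ι → R) :
    2 * (maxwellStefanMatrix f y *ᵥ (y * w) ⬝ᵥ w)
      = -∑ i, ∑ j, f i j * y i * y j * (w i - w j) ^ 2 := by
  simp only [dotProduct, maxwellStefanMatrix_mulVec_mul_apply hdiag]
  exact two_mul_sum_laplacian_mul_eq_neg_sum_sq (fun i j => by rw [hsym]; ring) w

end Laplacian

section Order

variable [CommRing R] [LinearOrder R] [IsStrictOrderedRing R]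

theorem maxwellStefanMatrix_mulVec_mul_dotProduct_nonpos [DecidableEq ι] {f : ι → ι → R}
    (hsym : ∀ i j, f i j = f j i) (hdiag : ∀ i, f i i = 0) (hf : ∀ i j, 0 ≤ f i j)
    {y : ι → R} (hy : ∀ i, 0 ≤ y i) (w : ι → R) :
    maxwellStefanMatrix f y *ᵥ (y * w) ⬝ᵥ w ≤ 0 := by
  have hsq : 0 ≤ ∑ i, ∑ j, f i j * y i * y j * (w i - w j) ^ 2 :=
    sum_nonneg fun i _ => sum_nonneg fun j _ =>
      mul_nonneg (mul_nonneg (mul_nonneg (hf i j) (hy i)) (hy j)) (sq_nonneg _)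
  linarith [two_mul_maxwellStefanMatrix_mulVec_mul_dotProduct hsym hdiag y w]

theorem sum_mul_sq_pos {c w : ι → R} (hc : ∀ i, 0 < c i) (hw : w ≠ 0) :
    0 < ∑ i, c i * w i ^ 2 := by
  obtain ⟨i, hi⟩ := Function.ne_iff.mp hw
  exact sum_pos' (fun k _ => mul_nonneg (hc k).le (sq_nonneg _))
    ⟨i, mem_univ i, mul_pos (hc i) (pow_two_pos_of_ne_zero hi)⟩

end Order

section Projection

variable [Field R]

/-- The operator `P(y) M⁻¹`, with `M` given by its diagonal. -/
def projInvMass (M y v : ι → R) : ι → R :=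
  fun i => (M i)⁻¹ * v i - (∑ k, (M k)⁻¹ * v k) * y i

theorem projInvMass_mul_dotProduct (M : ι → R) {y w : ι → R} (hE : ∑ i, y i * w i = 0) :
    projInvMass M y (y * w) ⬝ᵥ w = ∑ i, (M i)⁻¹ * y i * w i ^ 2 := by
  have hproj : ∑ i, (∑ k, (M k)⁻¹ * (y k * w k)) * y i * w i = 0 := by
    simp only [mul_assoc, ← mul_sum, hE, mul_zero]
  simp only [dotProduct, projInvMass, Pi.mul_apply, sub_mul, sum_sub_distrib, hproj,
    sub_zero]
  exact sum_congr rfl fun i _ => by ring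

end Projection

theorem maxwell_stefan_eigenvalues_positive_general
    (N : ℕ) (f : Fin N → Fin N → ℝ)
    (hsym : ∀ i j, f i j = f j i)
    (hpos : ∀ i j, i ≠ j → 0 < f i j)
    (hdiag : ∀ i, f i i = 0)
    (M : Fin N → ℝ) (hM : ∀ k, 0 < M k)
    (y : Fin N → ℝ)
    (hy : ∀ k, 0 < y k ∧ y k < 1)
    (B : Matrix (Fin N) (Fin N) ℝ)
    (hB : ∀ i j, B i j = if i = j then -(∑ l, f i l * y l) else f i j * y i)
    (lam : ℝ) (v : Fin N → ℝ)
    (hvE : ∑ i, v i = 0) (hv0 : v ≠ 0)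
    (heig : ∀ i, (M i)⁻¹ * v i - (∑ k, (M k)⁻¹ * v k) * y i = -lam * B.mulVec v i) :
    0 < lam := by
  have hB' : B = maxwellStefanMatrix f y := Matrix.ext hB
  have hf : ∀ i j, 0 ≤ f i j := fun i j =>
    (eq_or_ne i j).elim (fun h => h ▸ (hdiag i).ge) fun h => (hpos i j h).le
  set w : Fin N → ℝ := fun i => v i / y i
  have hv : v = y * w := funext fun i => (mul_div_cancel₀ _ (hy i).1.ne').symm
  have hw : w ≠ 0 := fun hw => hv0 (by rw [hv, hw, mul_zero])
  have htest : ∑ i, (M i)⁻¹ * y i * w i ^ 2 = lam * -(B *ᵥ v ⬝ᵥ w) := by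
    have heig' : projInvMass M y v = -lam • B *ᵥ v := funext heig
    rw [← projInvMass_mul_dotProduct M (hv ▸ hvE : ∑ i, (y * w) i = 0), ← hv, heig',
      smul_dotProduct, smul_eq_mul, neg_mul, mul_neg]
  have hmass : 0 < ∑ i, (M i)⁻¹ * y i * w i ^ 2 :=
    sum_mul_sq_pos (fun i => mul_pos (inv_pos.mpr (hM i)) (hy i).1) hw
  have hdiss : B *ᵥ v ⬝ᵥ w ≤ 0 := by
    rw [hB', hv]
    exact maxwellStefanMatrix_mulVec_mul_dotProduct_nonpos hsym hdiag hf (fun i => (hy i).1.le) w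
  exact pos_of_mul_pos_left (htest ▸ hmass) (neg_nonneg.mpr hdiss)

/-- Every real eigenvalue λ of A_0(y) = -A(y)P(y)M^{-1} on E, for
y ∈ D̊, is strictly positive: if v ∈ E, v ≠ 0, and P(y)M^{-1}v = -λ B(y)v, then λ > 0. -/
theorem maxwell_stefan_eigenvalues_positive
    (N : ℕ) (hN : 2 ≤ N) (f : Fin N → Fin N → ℝ)
    (hsym : ∀ i j, f i j = f j i)
    (hpos : ∀ i j, i ≠ j → 0 < f i j)
    (hdiag : ∀ i, f i i = 0)
    (M : Fin N → ℝ) (hM : ∀ k, 0 < M k)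
    (y : Fin N → ℝ)
    (hy : ∀ k, 0 < y k ∧ y k < 1) (hsum : ∑ k, y k = 1)
    (B : Matrix (Fin N) (Fin N) ℝ)
    (hB : ∀ i j, B i j = if i = j then -(∑ l, f i l * y l) else f i j * y i)
    (lam : ℝ) (v : Fin N → ℝ)
    (hvE : ∑ i, v i = 0) (hv0 : v ≠ 0)
    (heig : ∀ i, (M i)⁻¹ * v i - (∑ k, (M k)⁻¹ * v k) * y i = -lam * B.mulVec v i) :
    0 < lam :=
  maxwell_stefan_eigenvalues_positive_general N f hsym hpos hdiag M hM y hy B hB lam v hvE hv0 heig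
end
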